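/- arXiv:0905.2531 — 7 statements merged into one kernel-verified Lean document; each statement's English description precedes it below -/
import Mathlib

section
/- Every nonempty relatively weak* open subset of the closed unit ball of ℓ∞ (viewed as the dual of ℓ¹) has norm-diameter equal to 2. Equivalently: for every nonempty subset U of the closed unit ball of ℓ∞ that is open in the product (pointwise convergence) topology restricted to the ball, the supremum of ‖y − z‖∞ over y, z ∈ U equals 2. -/
/-!
The weak* topology on the ball only sees finitely many coordinates at a time: a basic
neighbourhood of `x` leaves some coordinate `n` free, so changing `x n` to `1` and to `-1`
yields two points of the set at sup-distance `2`.
-/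

open scoped ENNReal
open Function Metric

theorem IsOpen.exists_forall_update_mem {ι : Type*} [Infinite ι] [DecidableEq ι]
    {π : ι → Type*} [∀ i, TopologicalSpace (π i)] {V : Set (∀ i, π i)} (hV : IsOpen V)
    {f : ∀ i, π i} (hf : f ∈ V) : ∃ n, ∀ c, update f n c ∈ V := by
  obtain ⟨I, W, hW, hIW⟩ := isOpen_pi_iff.1 hV f hf
  obtain ⟨n, hn⟩ := Infinite.exists_notMem_finset I
  refine ⟨n, fun c => hIW fun i hi => ?_⟩
  rw [update_of_ne (ne_of_mem_of_not_mem hi hn)]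
  exact (hW i hi).2

section lp

variable {α : Type*} [DecidableEq α] {E : α → Type*} [∀ i, NormedAddCommGroup (E i)]
  {p : ℝ≥0∞}

theorem Memℓp.update {f : ∀ i, E i} (hf : Memℓp f p) (n : α) (c : E n) :
    Memℓp (update f n c) p := by
  rw [Pi.update_eq_sub_add_single]
  exact (hf.sub (lp.single p n (f n)).2).add (lp.single p n c).2

def lp.update (x : lp E p) (n : α) (c : E n) : lp E p :=
  ⟨Function.update x n c, (lp.memℓp x).update n c⟩

@[simp]
theorem lp.coe_update (x : lp E p) (n : α) (c : E n) : ⇑(lp.update x n c) = Function.update x n c :=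
  rfl

theorem lp.norm_update_le {x : lp E ∞} {r : ℝ} (hx : ‖x‖ ≤ r) {n : α} {c : E n} (hc : ‖c‖ ≤ r) :
    ‖lp.update x n c‖ ≤ r := by
  refine lp.norm_le_of_forall_le ((norm_nonneg c).trans hc) fun i => ?_
  rcases eq_or_ne i n with rfl | hin
  · simpa using hc
  · simpa [update_of_ne hin] using (lp.norm_apply_le_norm ENNReal.top_ne_zero x i).trans hx

end lp

theorem lp.diam_sep_closedBall_of_isOpen {ι : Type*} [Infinite ι] {r : ℝ}
    {V : Set (ι → ℝ)} (hV : IsOpen V)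
    (hne : {x ∈ closedBall (0 : lp (fun _ : ι => ℝ) ∞) r | ⇑x ∈ V}.Nonempty) :
    diam {x ∈ closedBall (0 : lp (fun _ : ι => ℝ) ∞) r | ⇑x ∈ V} = 2 * r := by
  classical
  set U := {x ∈ closedBall (0 : lp (fun _ : ι => ℝ) ∞) r | ⇑x ∈ V}
  obtain ⟨x, hxr, hxV⟩ := hne
  rw [mem_closedBall_zero_iff] at hxr
  have hr : 0 ≤ r := (norm_nonneg x).trans hxr
  have hbdd : Bornology.IsBounded U := isBounded_closedBall.subset fun _ hy => hy.1
  obtain ⟨n, hn⟩ := hV.exists_forall_update_mem hxV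
  have hmem : ∀ c : ℝ, |c| ≤ r → lp.update x n c ∈ U := fun c hc =>
    ⟨mem_closedBall_zero_iff.2 (lp.norm_update_le hxr hc), hn c⟩
  refine le_antisymm ?_ ?_
  · exact (diam_mono (fun _ hy => hy.1) isBounded_closedBall).trans (diam_closedBall hr)
  · calc 2 * r = ‖(lp.update x n r - lp.update x n (-r)) n‖ := by
          rw [lp.coeFn_sub, Pi.sub_apply]
          simp [abs_of_nonneg (add_nonneg hr hr), two_mul]
      _ ≤ dist (lp.update x n r) (lp.update x n (-r)) := by
          rw [dist_eq_norm]
          exact lp.norm_apply_le_norm ENNReal.top_ne_zero _ n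
      _ ≤ diam U := dist_le_diam_of_mem hbdd (hmem r (by simp [abs_of_nonneg hr]))
          (hmem (-r) (by simp [abs_of_nonneg hr]))

/-- Every nonempty subset of the closed unit ball of `ℓ∞`, open in the topology of
pointwise (product) convergence restricted to the ball (the weak* topology of
`ℓ∞ = (ℓ¹)*` on the ball), has norm-diameter `2`. -/
theorem linfty_weakstar_open_diam_two
    (U : Set (lp (fun _ : ℕ => ℝ) ∞)) (hne : U.Nonempty)
    (hopen : ∃ V : Set (ℕ → ℝ), IsOpen V ∧
      U = {x ∈ Metric.closedBall (0 : lp (fun _ : ℕ => ℝ) ∞) 1 | (x : ℕ → ℝ) ∈ V}) :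
    Metric.diam U = 2 := by
  obtain ⟨V, hV, rfl⟩ := hopen
  simpa using lp.diam_sep_closedBall_of_isOpen hV hne
end

section
/- Let X be a Banach space, x ∈ X with x ≠ 0, and 0 < a < ‖x‖ with ‖x‖ = 1 (or general). Define C = ⋃_{t ∈ 𝕂\{0}} t·(x + a·B_X), D = ⋃_{t ∈ 𝕂} t·(x + a·D_X), C' = C ∩ B_X, D' = D ∩ D_X. Then the norm-closure of C' equals D'; in particular D' is norm-closed and C' is norm-dense in D'. -/
/-!
Both cones are unions of balls: `C = ⋃_{t ≠ 0} B(t x, ‖t‖ a)` and `D = ⋃_t D(t x, ‖t‖ a)`.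
If `y ∈ D(t x, ‖t‖ a)` then `‖t‖ (‖x‖ - a) ≤ ‖y‖`, so as `a < ‖x‖` the parameter `t` of a point
of `D_X` ranges over a compact set, and `D ∩ D_X` is closed. Conversely every closed ball is the
closure of the open one and `0 = lim_{t → 0} t x`, so `D ⊆ closure C`; since `C` is stable under
nonzero scalars, `y ∈ closure C ∩ D_X` is the limit of `s y ∈ closure C ∩ B_X ⊆ closure (C ∩ B_X)`
as `s → 1⁻`.
-/

open Metric Set Filter Topology Pointwise

section Cone

variable (𝕜 : Type*) {X : Type*} [RCLike 𝕜] [NormedAddCommGroup X] [NormedSpace 𝕜 X]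

/-- `⋃_{t ≠ 0} t • (x + a • B_X)`, written with `t • ball x a = ball (t • x) (‖t‖ * a)`. -/
def ballCone (x : X) (a : ℝ) : Set X :=
  {y | ∃ t : 𝕜, t ≠ 0 ∧ y ∈ ball (t • x) (‖t‖ * a)}

/-- `⋃_t t • (x + a • D_X)`, written with `t • closedBall x a = closedBall (t • x) (‖t‖ * a)`. -/
def closedBallCone (x : X) (a : ℝ) : Set X :=
  {y | ∃ t : 𝕜, y ∈ closedBall (t • x) (‖t‖ * a)}

variable {𝕜} {x : X} {a : ℝ}

theorem mem_ballCone_iff (ha : 0 < a) {y : X} :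
    y ∈ ballCone 𝕜 x a ↔ ∃ t : 𝕜, t ≠ 0 ∧ ∃ z ∈ ball (0 : X) 1, y = t • (x + (a : 𝕜) • z) := by
  have ha' : (a : 𝕜) ≠ 0 := RCLike.ofReal_ne_zero.mpr ha.ne'
  refine exists_congr fun t => and_congr_right fun ht => ?_
  have hball : (a : 𝕜) • ball (0 : X) 1 = ball 0 a := by
    rw [smul_unitBall ha', RCLike.norm_ofReal, abs_of_pos ha]
  rw [← _root_.smul_ball ht, ← vadd_ball_zero, ← hball]
  simp [mem_smul_set, mem_vadd_set, eq_comm]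

theorem mem_closedBallCone_iff (ha : 0 ≤ a) {y : X} :
    y ∈ closedBallCone 𝕜 x a ↔ ∃ t : 𝕜, ∃ z ∈ closedBall (0 : X) 1, y = t • (x + (a : 𝕜) • z) := by
  refine exists_congr fun t => ?_
  have hball : (a : 𝕜) • closedBall (0 : X) 1 = closedBall 0 a := by
    rw [smul_unitClosedBall, RCLike.norm_ofReal, abs_of_nonneg ha]
  rw [← _root_.smul_closedBall t x ha, ← vadd_closedBall_zero, ← hball]
  simp [mem_smul_set, mem_vadd_set, eq_comm]

theorem ballCone_subset_closedBallCone : ballCone 𝕜 x a ⊆ closedBallCone 𝕜 x a :=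
  fun _ ⟨t, _, hy⟩ => ⟨t, ball_subset_closedBall hy⟩

theorem smul_mem_ballCone {c : 𝕜} (hc : c ≠ 0) {y : X} (hy : y ∈ ballCone 𝕜 x a) :
    c • y ∈ ballCone 𝕜 x a := by
  obtain ⟨t, ht, hy⟩ := hy
  refine ⟨c * t, mul_ne_zero hc ht, ?_⟩
  rw [mul_smul, norm_mul, mul_assoc, ← _root_.smul_ball hc]
  exact smul_mem_smul_set hy

theorem zero_mem_closure_ballCone (ha : 0 < a) : (0 : X) ∈ closure (ballCone 𝕜 x a) := by
  have hlim : Tendsto (fun s : 𝕜 => s • x) (𝓝[≠] 0) (𝓝 0) := by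
    simpa using (tendsto_id.smul_const x).mono_left (nhdsWithin_le_nhds (a := (0 : 𝕜)))
  refine mem_closure_of_tendsto hlim (eventually_nhdsWithin_of_forall fun s hs => ?_)
  exact ⟨s, hs, mem_ball_self (mul_pos (norm_pos_iff.mpr hs) ha)⟩

theorem closedBallCone_subset_closure_ballCone (ha : 0 < a) :
    closedBallCone 𝕜 x a ⊆ closure (ballCone 𝕜 x a) := by
  rintro y ⟨t, hy⟩
  rcases eq_or_ne t 0 with rfl | ht
  · rw [norm_zero, zero_mul, closedBall_zero, zero_smul, mem_singleton_iff] at hy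
    exact hy ▸ zero_mem_closure_ballCone ha
  · let : NormedSpace ℝ X := NormedSpace.restrictScalars ℝ 𝕜 X
    rw [← closure_ball _ (mul_pos (norm_pos_iff.mpr ht) ha).ne'] at hy
    exact closure_mono (t := ballCone 𝕜 x a) (fun w hw => ⟨t, ht, hw⟩) hy

theorem norm_mul_sub_le_norm_of_mem_closedBall {t : 𝕜} {y : X}
    (hy : y ∈ closedBall (t • x) (‖t‖ * a)) :
    ‖t‖ * (‖x‖ - a) ≤ ‖y‖ := by
  rw [mem_closedBall, dist_comm, dist_eq_norm] at hy
  have := norm_sub_norm_le (t • x) y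
  rw [norm_smul] at this
  linarith

theorem isClosed_closedBallCone_inter_closedBall (ha : a < ‖x‖) (R : ℝ) :
    IsClosed (closedBallCone 𝕜 x a ∩ closedBall 0 R) := by
  set K := closedBall (0 : 𝕜) (R / (‖x‖ - a))
  have : CompactSpace K := isCompact_iff_compactSpace.mp (isCompact_closedBall _ _)
  have hS : closedBallCone 𝕜 x a ∩ closedBall 0 R = Prod.snd ''
      {p : K × X | p.2 ∈ closedBall ((p.1 : 𝕜) • x) (‖(p.1 : 𝕜)‖ * a) ∧ p.2 ∈ closedBall 0 R} := by
    ext y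
    constructor
    · rintro ⟨⟨t, hy⟩, hyR⟩
      have htK : t ∈ K := by
        rw [mem_closedBall_zero_iff, le_div_iff₀ (sub_pos.mpr ha)]
        exact (norm_mul_sub_le_norm_of_mem_closedBall hy).trans (mem_closedBall_zero_iff.mp hyR)
      exact ⟨(⟨t, htK⟩, y), ⟨hy, hyR⟩, rfl⟩
    · rintro ⟨⟨t, y⟩, ⟨hy, hyR⟩, rfl⟩
      exact ⟨⟨t, hy⟩, hyR⟩
  rw [hS]
  refine isClosedMap_snd_of_compactSpace _ (IsClosed.inter ?_ ?_)
  · exact isClosed_le (by fun_prop) (by fun_prop)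
  · exact isClosed_closedBall.preimage continuous_snd

end Cone

theorem closure_inter_closedBall_subset_closure_inter_ball {𝕜 X : Type*} [RCLike 𝕜]
    [NormedAddCommGroup X] [NormedSpace 𝕜 X] {C : Set X}
    (hC : ∀ c : 𝕜, c ≠ 0 → ∀ y ∈ C, c • y ∈ C) {r : ℝ} (hr : 0 < r) :
    closure C ∩ closedBall 0 r ⊆ closure (C ∩ ball 0 r) := by
  rintro y ⟨hyC, hyr⟩
  have hlim : Tendsto (fun s : ℝ => (s : 𝕜) • y) (𝓝[<] 1) (𝓝 y) := by
    simpa using (((RCLike.continuous_ofReal (K := 𝕜)).tendsto 1).smul_const y).mono_left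
      nhdsWithin_le_nhds
  refine isClosed_closure.mem_of_tendsto hlim ?_
  filter_upwards [Ioo_mem_nhdsLT (zero_lt_one' ℝ)] with s ⟨hs0, hs1⟩
  have hs : (s : 𝕜) ≠ 0 := RCLike.ofReal_ne_zero.mpr hs0.ne'
  have hs_ball : (s : 𝕜) • y ∈ ball (0 : X) r := by
    rw [mem_ball_zero_iff, norm_smul, RCLike.norm_ofReal, abs_of_pos hs0]
    nlinarith [mem_closedBall_zero_iff.mp hyr]
  have hs_closure : (s : 𝕜) • y ∈ closure C :=
    closure_mono (smul_set_subset_iff.mpr fun z hz => hC _ hs z hz)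
      (smul_closure_subset _ _ (smul_mem_smul_set hyC))
  simpa only [inter_comm] using isOpen_ball.inter_closure ⟨hs_ball, hs_closure⟩

theorem closure_cut_open_cone_general {𝕜 X : Type*} [RCLike 𝕜]
    [NormedAddCommGroup X] [NormedSpace 𝕜 X]
    (x : X) (a : ℝ) (ha0 : 0 < a) (ha : a < ‖x‖) :
    closure ({y : X | ∃ t : 𝕜, t ≠ 0 ∧ ∃ z ∈ Metric.ball (0 : X) 1, y = t • (x + (a : 𝕜) • z)} ∩
        Metric.ball (0 : X) 1) =
      {y : X | ∃ t : 𝕜, ∃ z ∈ Metric.closedBall (0 : X) 1, y = t • (x + (a : 𝕜) • z)} ∩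
        Metric.closedBall (0 : X) 1 := by
  have hC : {y : X | ∃ t : 𝕜, t ≠ 0 ∧ ∃ z ∈ ball (0 : X) 1, y = t • (x + (a : 𝕜) • z)} =
      ballCone 𝕜 x a := Set.ext fun _ => (mem_ballCone_iff ha0).symm
  have hD : {y : X | ∃ t : 𝕜, ∃ z ∈ closedBall (0 : X) 1, y = t • (x + (a : 𝕜) • z)} =
      closedBallCone 𝕜 x a := Set.ext fun _ => (mem_closedBallCone_iff ha0.le).symm
  rw [hC, hD]
  refine Subset.antisymm ?_ ?_
  · exact closure_minimal (inter_subset_inter ballCone_subset_closedBallCone ball_subset_closedBall)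
      (isClosed_closedBallCone_inter_closedBall ha 1)
  · calc closedBallCone 𝕜 x a ∩ closedBall 0 1
        ⊆ closure (ballCone 𝕜 x a) ∩ closedBall 0 1 :=
          inter_subset_inter_left _ (closedBallCone_subset_closure_ballCone ha0)
      _ ⊆ closure (ballCone 𝕜 x a ∩ ball 0 1) :=
          closure_inter_closedBall_subset_closure_inter_ball
            (fun _ hc _ hy => smul_mem_ballCone hc hy) one_pos

/-- With `C' = C ∩ B_X` and `D' = D ∩ D_X` (cones as in the paper), the norm-closure of `C'`
equals `D'`; in particular `D'` is norm-closed and `C'` is norm-dense in `D'`. -/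
theorem closure_cut_open_cone {𝕜 X : Type*} [RCLike 𝕜]
    [NormedAddCommGroup X] [NormedSpace 𝕜 X] [CompleteSpace X]
    (x : X) (hx : x ≠ 0) (a : ℝ) (ha0 : 0 < a) (ha : a < ‖x‖) :
    closure ({y : X | ∃ t : 𝕜, t ≠ 0 ∧ ∃ z ∈ Metric.ball (0 : X) 1, y = t • (x + (a : 𝕜) • z)} ∩
        Metric.ball (0 : X) 1) =
      {y : X | ∃ t : 𝕜, ∃ z ∈ Metric.closedBall (0 : X) 1, y = t • (x + (a : 𝕜) • z)} ∩
        Metric.closedBall (0 : X) 1 :=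
  closure_cut_open_cone_general x a ha0 ha
end

section
/- Let X be a Banach space which is a dual space (X = Y* with the dual norm), let x ∈ X, x ≠ 0, and 0 < a < ‖x‖. Define D = ⋃_{t ∈ 𝕂} t·(x + a·D_X) and D' = D ∩ D_X. Then D' is weak* closed in X. -/
/-!
If `y = t • (x + a • z)` with `‖z‖ ≤ 1` and `‖y‖ ≤ 1`, then `‖t‖ (‖x‖ - a) ≤ ‖y‖ ≤ 1`, so the scalar
`t` stays in a bounded, hence compact, set of scalars. Thus `D'` is the image of
`closedBall 0 (‖x‖ - a)⁻¹ × D_X` under the weak* continuous map `(t, z) ↦ t • (x + a • z)`,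
intersected with `D_X`. By Banach–Alaoglu both sets are weak* compact, hence weak* closed.
-/

open Metric Set

section NormedSpace

variable {𝕜 E : Type*} [RCLike 𝕜] [NormedAddCommGroup E] [NormedSpace 𝕜 E]

lemma norm_le_inv_of_norm_smul_add_smul_le_one {x z : E} {a : ℝ} {t : 𝕜} (ha0 : 0 ≤ a)
    (ha : a < ‖x‖) (hz : ‖z‖ ≤ 1) (h : ‖t • (x + (a : 𝕜) • z)‖ ≤ 1) : ‖t‖ ≤ (‖x‖ - a)⁻¹ := by
  have haz : ‖(a : 𝕜) • z‖ ≤ a := by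
    rw [norm_smul, RCLike.norm_ofReal, abs_of_nonneg ha0]
    exact mul_le_of_le_one_right ha0 hz
  have hxz : ‖x‖ - a ≤ ‖x + (a : 𝕜) • z‖ := by
    linarith [norm_sub_le_norm_add x ((a : 𝕜) • z)]
  rw [← one_div, le_div_iff₀ (sub_pos.2 ha)]
  calc ‖t‖ * (‖x‖ - a) ≤ ‖t‖ * ‖x + (a : 𝕜) • z‖ := by gcongr
    _ = ‖t • (x + (a : 𝕜) • z)‖ := (norm_smul t _).symm
    _ ≤ 1 := h

lemma setOf_smul_add_smul_inter_closedBall_eq {x : E} {a : ℝ} (ha0 : 0 ≤ a) (ha : a < ‖x‖) :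
    {y : E | ∃ t : 𝕜, ∃ z ∈ closedBall (0 : E) 1, y = t • (x + (a : 𝕜) • z)} ∩ closedBall 0 1 =
      (fun p : 𝕜 × E => p.1 • (x + (a : 𝕜) • p.2)) ''
        (closedBall 0 (‖x‖ - a)⁻¹ ×ˢ closedBall 0 1) ∩ closedBall 0 1 := by
  ext y
  simp only [mem_inter_iff, mem_ofPred_eq, mem_image, mem_prod, mem_closedBall_zero_iff,
    Prod.exists]
  constructor
  · rintro ⟨⟨t, z, hz, rfl⟩, hy⟩
    exact ⟨⟨t, z, ⟨norm_le_inv_of_norm_smul_add_smul_le_one ha0 ha hz hy, hz⟩, rfl⟩, hy⟩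
  · rintro ⟨⟨t, z, ⟨-, hz⟩, rfl⟩, hy⟩
    exact ⟨⟨t, z, hz, rfl⟩, hy⟩

end NormedSpace

lemma LinearEquiv.image_image_smul_add_smul {𝕜 M N : Type*} [CommSemiring 𝕜] [AddCommMonoid M]
    [AddCommMonoid N] [Module 𝕜 M] [Module 𝕜 N] (f : M ≃ₗ[𝕜] N) (x : M) (c : 𝕜) (s : Set 𝕜)
    (u : Set M) :
    f '' ((fun p : 𝕜 × M => p.1 • (x + c • p.2)) '' (s ×ˢ u)) =
      (fun p : 𝕜 × N => p.1 • (f x + c • p.2)) '' (s ×ˢ (f '' u)) := by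
  rw [image_image]
  conv_rhs => rw [← image_id s, prod_image_image_eq, image_image]
  simp

theorem cut_cone_weakstar_closed_general {𝕜 Y : Type*} [RCLike 𝕜]
    [NormedAddCommGroup Y] [NormedSpace 𝕜 Y]
    (x : StrongDual 𝕜 Y) (a : ℝ) (ha0 : 0 < a) (ha : a < ‖x‖) :
    IsClosed (StrongDual.toWeakDual ''
      ({y : StrongDual 𝕜 Y | ∃ t : 𝕜, ∃ z ∈ Metric.closedBall (0 : StrongDual 𝕜 Y) 1,
          y = t • (x + (a : 𝕜) • z)} ∩ Metric.closedBall (0 : StrongDual 𝕜 Y) 1)) := by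
  have hB : IsCompact (StrongDual.toWeakDual '' closedBall (0 : StrongDual 𝕜 Y) 1) := by
    rw [LinearEquiv.image_eq_preimage_symm]
    exact WeakDual.isCompact_closedBall 0 1
  rw [setOf_smul_add_smul_inter_closedBall_eq ha0.le ha,
    image_inter StrongDual.toWeakDual.injective,
    LinearEquiv.image_image_smul_add_smul]
  exact (((isCompact_closedBall 0 _).prod hB).image (by fun_prop)).isClosed.inter hB.isClosed

/-- In a dual Banach space `X = Y*` with the dual norm, the set `D' = D ∩ D_X`,
where `D = ⋃_{t ∈ 𝕜} t(x + a D_X)`, `x ≠ 0`, `0 < a < ‖x‖`, is weak* closed. -/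
theorem cut_cone_weakstar_closed {𝕜 Y : Type*} [RCLike 𝕜]
    [NormedAddCommGroup Y] [NormedSpace 𝕜 Y]
    (x : StrongDual 𝕜 Y) (hx : x ≠ 0) (a : ℝ) (ha0 : 0 < a) (ha : a < ‖x‖) :
    IsClosed (StrongDual.toWeakDual ''
      ({y : StrongDual 𝕜 Y | ∃ t : 𝕜, ∃ z ∈ Metric.closedBall (0 : StrongDual 𝕜 Y) 1,
          y = t • (x + (a : 𝕜) • z)} ∩ Metric.closedBall (0 : StrongDual 𝕜 Y) 1)) :=
  cut_cone_weakstar_closed_general x a ha0 ha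
end

section
/- Let X be a separable infinite-dimensional Banach space and let ε' > 2ε > 0 be such that every nonempty relatively weak* open subset of the closed dual unit ball D_{X*} has norm-diameter greater than ε'. Then there exists a sequence (ξₙ) in X* with: (i) ‖ξₙ‖ = 1 for all n; (ii) {ξₙ : n ∈ ℕ} is weak* dense in D_{X*}; (iii) dist(ξₙ, span{ξ₁, …, ξ_{n−1}}) > ε for every n ≥ 2. -/
/-!
The weak* topology of the dual ball `B` is compact metrizable, so it has a countable base `(Uₙ)`,
and we pick `ξₙ ∈ Uₙ` of norm one and far from the span `F` of the earlier terms. As `F` is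
finite-dimensional, the functionals of norm `≤ 1` within `ε` of `F` lie in finitely many norm balls
of radius `ε'/2`, which are weak* closed. They cannot cover `Uₙ ∩ B`: otherwise one of them would
contain a nonempty relatively weak* open subset of `B`, of diameter `≤ ε'`. A point of `Uₙ ∩ B`
outside all of them is then pushed to the unit sphere along a functional vanishing on the finitely
many vectors that define a basic weak* neighbourhood, which exists because `X` is
infinite-dimensional.
-/

open Metric NormedSpace

theorem WeakDual.exists_finset_forall_eqOn_mem {𝕜 E : Type*} [CommSemiring 𝕜] [TopologicalSpace 𝕜]
    [ContinuousAdd 𝕜] [ContinuousConstSMul 𝕜 𝕜] [AddCommMonoid E] [Module 𝕜 E]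
    [TopologicalSpace E] {W : Set (WeakDual 𝕜 E)} (hW : IsOpen W) {f : WeakDual 𝕜 E}
    (hf : f ∈ W) : ∃ s : Finset E, ∀ g : WeakDual 𝕜 E, Set.EqOn g f s → g ∈ W := by
  obtain ⟨U, hU, rfl⟩ := isOpen_induced_iff.mp hW
  obtain ⟨s, u, hu, hsub⟩ := isOpen_pi_iff.mp hU _ hf
  exact ⟨s, fun g hg => hsub fun x hx => show g x ∈ u x from hg hx ▸ (hu x hx).2⟩

theorem exists_norm_add_smul_eq {E : Type*} [NormedAddCommGroup E] [NormedSpace ℝ E]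
    {x v : E} (hv : v ≠ 0) {r : ℝ} (hx : ‖x‖ ≤ r) : ∃ t : ℝ, ‖x + t • v‖ = r := by
  set T := (r + ‖x‖) / ‖v‖
  have hT : 0 ≤ T := div_nonneg (by linarith [norm_nonneg x]) (norm_nonneg v)
  have hxT : r ≤ ‖x + T • v‖ := by
    have hTv : ‖T • v‖ = r + ‖x‖ := by
      rw [norm_smul, Real.norm_of_nonneg hT, div_mul_cancel₀ _ (norm_ne_zero_iff.mpr hv)]
    have := norm_sub_le (x + T • v) x
    rw [add_sub_cancel_left, hTv] at this
    linarith
  have hcont : Continuous fun t : ℝ => ‖x + t • v‖ := by fun_prop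
  obtain ⟨t, -, ht⟩ := intermediate_value_Icc hT hcont.continuousOn ⟨by simpa using hx, hxT⟩
  exact ⟨t, ht⟩

theorem exists_dual_ne_zero_forall_eq_zero {𝕜 E : Type*} [RCLike 𝕜] [NormedAddCommGroup E]
    [NormedSpace 𝕜 E] (hinf : ¬ FiniteDimensional 𝕜 E) (s : Finset E) :
    ∃ h : StrongDual 𝕜 E, h ≠ 0 ∧ ∀ x ∈ s, h x = 0 := by
  set M := Submodule.span 𝕜 (s : Set E)
  obtain ⟨x₀, hx₀⟩ : ∃ x₀, x₀ ∉ M := by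
    by_contra! h
    exact hinf ⟨⟨s, Submodule.eq_top_iff'.mpr h⟩⟩
  have : IsClosed (M : Set E) := M.closed_of_finiteDimensional
  obtain ⟨g, hg⟩ := SeparatingDual.exists_ne_zero (R := 𝕜)
    (mt (Submodule.Quotient.mk_eq_zero M).mp hx₀)
  refine ⟨g.comp M.mkQL, fun h => hg (by simpa using congr($h x₀)), fun x hx => ?_⟩
  simp [(Submodule.Quotient.mk_eq_zero M).mpr (Submodule.subset_span hx)]

theorem WeakDual.exists_norm_eq_mem_of_isOpen {𝕜 E : Type*} [RCLike 𝕜] [NormedAddCommGroup E]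
    [NormedSpace 𝕜 E] (hinf : ¬ FiniteDimensional 𝕜 E) {W : Set (WeakDual 𝕜 E)} (hW : IsOpen W)
    {f : StrongDual 𝕜 E} {r : ℝ} (hf : ‖f‖ ≤ r) (hfW : StrongDual.toWeakDual f ∈ W) :
    ∃ g : StrongDual 𝕜 E, ‖g‖ = r ∧ StrongDual.toWeakDual g ∈ W := by
  obtain ⟨s, hs⟩ := exists_finset_forall_eqOn_mem hW hfW
  obtain ⟨h, hh0, hhs⟩ := exists_dual_ne_zero_forall_eq_zero hinf s
  obtain ⟨t, ht⟩ := exists_norm_add_smul_eq hh0 hf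
  exact ⟨f + t • h, ht, hs _ fun x hx => show (f + t • h) x = f x by simp [hhs x hx]⟩

theorem exists_isOpen_inter_nonempty_subset_of_subset_biUnion {Y ι : Type*} [TopologicalSpace Y]
    {B : Set Y} {C : ι → Set Y} (t : Finset ι) (hC : ∀ i ∈ t, IsClosed (C i)) {W : Set Y}
    (hW : IsOpen W) (hne : (W ∩ B).Nonempty) (hcov : W ∩ B ⊆ ⋃ i ∈ t, C i) :
    ∃ i ∈ t, ∃ W' : Set Y, IsOpen W' ∧ (W' ∩ B).Nonempty ∧ W' ∩ B ⊆ C i := by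
  classical
  induction t using Finset.induction_on generalizing W with
  | empty => simp_all [Set.subset_empty_iff, Set.nonempty_iff_ne_empty]
  | insert a t _ ih =>
    by_cases ha : W ∩ B ⊆ C a
    · exact ⟨a, Finset.mem_insert_self a t, W, hW, hne, ha⟩
    obtain ⟨y, ⟨hyW, hyB⟩, hya⟩ := Set.not_subset.mp ha
    obtain ⟨i, hi, hW'⟩ := ih (fun i hi => hC i (Finset.mem_insert_of_mem hi))
      (hW.inter (hC a (Finset.mem_insert_self a t)).isOpen_compl) ⟨y, ⟨hyW, hya⟩, hyB⟩
      fun z ⟨⟨hzW, hza⟩, hzB⟩ => by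
        have hz := hcov ⟨hzW, hzB⟩
        rw [Finset.set_biUnion_insert] at hz
        exact hz.resolve_left hza
    exact ⟨i, Finset.mem_insert_of_mem hi, hW'⟩

theorem Submodule.exists_finset_subset_biUnion_closedBall {E : Type*} [NormedAddCommGroup E]
    [NormedSpace ℝ E] (F : Submodule ℝ E) [FiniteDimensional ℝ F] {S : Set E}
    (hS : Bornology.IsBounded S) {ε r : ℝ} (hεr : ε < r) :
    ∃ N : Finset E, {x ∈ S | infDist x F ≤ ε} ⊆ ⋃ p ∈ N, closedBall p r := by
  obtain ⟨R, hR⟩ := hS.subset_closedBall 0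
  obtain ⟨η, hη, hηr⟩ : ∃ η, 0 < η ∧ ε + 2 * η = r := ⟨(r - ε) / 2, by linarith, by ring⟩
  obtain ⟨t, -, ht, hcov⟩ := finite_approx_of_totallyBounded
    (isCompact_closedBall (0 : F) (R + r)).totallyBounded η hη
  obtain ⟨N, hN⟩ := (ht.image Subtype.val).exists_finset_coe
  refine ⟨N, fun x ⟨hxS, hxF⟩ => ?_⟩
  obtain ⟨p, hpF, hxp⟩ := (infDist_lt_iff ⟨0, F.zero_mem⟩).mp
    (hxF.trans_lt (lt_add_of_pos_right ε hη))
  have hp : (⟨p, hpF⟩ : F) ∈ closedBall 0 (R + r) := by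
    have := mem_closedBall_zero_iff.mp (hR hxS)
    rw [mem_closedBall_zero_iff]
    change ‖p‖ ≤ R + r
    linarith [norm_le_norm_add_norm_sub' p x, dist_eq_norm x p, norm_sub_rev x p]
  obtain ⟨q, hq, hpq⟩ := Set.mem_iUnion₂.mp (hcov hp)
  refine Set.mem_iUnion₂.mpr ⟨q, by rw [← Finset.mem_coe, hN]; exact Set.mem_image_of_mem _ hq, ?_⟩
  rw [mem_closedBall]
  linarith [dist_triangle x p q, (mem_ball.mp hpq : dist p (q : E) < η)]

theorem exists_seq_forall_image_Iio_of_forall_finset {α : Type*} (P : ℕ → Set α → α → Prop)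
    (h : ∀ n (s : Finset α), ∃ a, P n s a) :
    ∃ ξ : ℕ → α, ∀ n, P n (ξ '' Set.Iio n) (ξ n) := by
  classical
  choose pick hpick using h
  let S : ℕ → Finset α := fun n =>
    Nat.rec (motive := fun _ => Finset α) ∅ (fun m s => insert (pick m s) s) n
  have hS : ∀ n, (↑(S n) : Set α) = (fun m => pick m (S m)) '' Set.Iio n := by
    intro n
    induction n with
    | zero => simp [S]
    | succ n ih =>
      rw [← Order.succ_eq_add_one, Order.Iio_succ_eq_insert, Set.image_insert_eq, ← ih]
      exact Finset.coe_insert _ _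
  exact ⟨fun n => pick n (S n), fun n => hS n ▸ hpick n (S n)⟩

theorem exists_seq_isOpen_inter_nonempty_subset {Y : Type*} [TopologicalSpace Y] (K : Set Y)
    [SecondCountableTopology K] (hK : K.Nonempty) :
    ∃ U : ℕ → Set Y, (∀ n, IsOpen (U n)) ∧ (∀ n, (U n ∩ K).Nonempty) ∧
      ∀ W, IsOpen W → (W ∩ K).Nonempty → ∃ n, U n ∩ K ⊆ W := by
  obtain ⟨b, hbc, hb0, hb⟩ := TopologicalSpace.exists_countable_basis K
  obtain ⟨k, hk⟩ := hK
  obtain ⟨v, hv, -⟩ := Set.sUnion_eq_univ_iff.mp hb.sUnion_eq ⟨k, hk⟩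
  obtain ⟨V, rfl⟩ := hbc.exists_eq_range ⟨v, hv⟩
  have : ∀ n, ∃ U, IsOpen U ∧ Subtype.val ⁻¹' U = V n :=
    fun n => isOpen_induced_iff.mp (hb.isOpen (Set.mem_range_self n))
  choose U hU hUV using this
  refine ⟨U, hU, fun n => ?_, fun W hW ⟨w, hwW, hwK⟩ => ?_⟩
  · obtain ⟨⟨y, hyK⟩, hy⟩ := Set.nonempty_iff_ne_empty.mpr fun h => hb0 (h ▸ Set.mem_range_self n)
    rw [← hUV n] at hy
    exact ⟨y, hy, hyK⟩
  · obtain ⟨_, ⟨n, rfl⟩, -, hnW⟩ :=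
      hb.exists_subset_of_mem_open (a := ⟨w, hwK⟩) hwW (hW.preimage continuous_subtype_val)
    exact ⟨n, fun y ⟨hyU, hyK⟩ => hnW (show (⟨y, hyK⟩ : K) ∈ V n by rw [← hUV n]; exact hyU)⟩

theorem exists_norm_eq_one_mem_lt_infDist {X : Type*} [NormedAddCommGroup X] [NormedSpace ℝ X]
    (hinf : ¬ FiniteDimensional ℝ X) {ε ε' : ℝ} (hε : 0 ≤ ε) (hεε' : 2 * ε < ε')
    (hdiam : ∀ V : Set (StrongDual ℝ X), V.Nonempty →
      (∃ W : Set (WeakDual ℝ X), IsOpen W ∧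
        V = {f ∈ closedBall (0 : StrongDual ℝ X) 1 | StrongDual.toWeakDual f ∈ W}) →
      ε' < Metric.diam V)
    (F : Submodule ℝ (StrongDual ℝ X)) [FiniteDimensional ℝ F] {W : Set (WeakDual ℝ X)}
    (hW : IsOpen W) (hne : (W ∩ WeakDual.toStrongDual ⁻¹' closedBall 0 1).Nonempty) :
    ∃ ξ : StrongDual ℝ X, ‖ξ‖ = 1 ∧ StrongDual.toWeakDual ξ ∈ W ∧ ε < infDist ξ F := by
  obtain ⟨N, hN⟩ := F.exists_finset_subset_biUnion_closedBall isBounded_closedBall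
    (show ε < ε' / 2 by linarith) (S := closedBall 0 1)
  have hC : ∀ p ∈ N, IsClosed (WeakDual.toStrongDual ⁻¹' closedBall p (ε' / 2)) :=
    fun p _ => WeakDual.isClosed_closedBall p _
  by_cases hcov : W ∩ WeakDual.toStrongDual ⁻¹' closedBall 0 1 ⊆
      ⋃ p ∈ N, WeakDual.toStrongDual ⁻¹' closedBall p (ε' / 2)
  · obtain ⟨p, -, W', hW', ⟨f, hf⟩, hW'p⟩ :=
      exists_isOpen_inter_nonempty_subset_of_subset_biUnion N hC hW hne hcov
    set V := {g ∈ closedBall (0 : StrongDual ℝ X) 1 | StrongDual.toWeakDual g ∈ W'}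
    have hVp : V ⊆ closedBall p (ε' / 2) := fun g hg => hW'p ⟨hg.2, hg.1⟩
    have := hdiam V ⟨f, hf.2, hf.1⟩ ⟨W', hW', rfl⟩
    linarith [(diam_mono hVp isBounded_closedBall).trans (diam_closedBall (by linarith))]
  obtain ⟨f, ⟨hfW, hfB⟩, hfC⟩ := Set.not_subset.mp hcov
  obtain ⟨ξ, hξ1, hξW, hξC⟩ := WeakDual.exists_norm_eq_mem_of_isOpen hinf
    (hW.inter (isClosed_biUnion_finset hC).isOpen_compl) (mem_closedBall_zero_iff.mp hfB)
    ⟨hfW, hfC⟩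
  refine ⟨ξ, hξ1, hξW, not_le.mp fun hξF => hξC ?_⟩
  simpa using hN ⟨mem_closedBall_zero_iff.mpr hξ1.le, hξF⟩

theorem exists_weakstar_dense_separated_sequence_general
    {X : Type*} [NormedAddCommGroup X] [NormedSpace ℝ X]
    [TopologicalSpace.SeparableSpace X] (hinf : ¬ FiniteDimensional ℝ X)
    (ε ε' : ℝ) (hε : 0 < ε) (hεε' : 2 * ε < ε')
    (hdiam : ∀ V : Set (StrongDual ℝ X), V.Nonempty →
      (∃ W : Set (WeakDual ℝ X), IsOpen W ∧
        V = {f ∈ closedBall (0 : StrongDual ℝ X) 1 | StrongDual.toWeakDual f ∈ W}) →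
      ε' < Metric.diam V) :
    ∃ ξ : ℕ → StrongDual ℝ X,
      (∀ n, ‖ξ n‖ = 1) ∧
      (closedBall (0 : StrongDual ℝ X) 1 ⊆
        StrongDual.toWeakDual ⁻¹' closure (StrongDual.toWeakDual '' Set.range ξ)) ∧
      (∀ n : ℕ, 1 ≤ n →
        ε < Metric.infDist (ξ n)
          (Submodule.span ℝ (ξ '' {m | m < n}) : Set (StrongDual ℝ X))) := by
  set B := WeakDual.toStrongDual ⁻¹' closedBall (0 : StrongDual ℝ X) 1
  have hB : IsCompact B := WeakDual.isCompact_closedBall 0 1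
  have := WeakDual.metrizable_of_isCompact ℝ X B hB
  have := isCompact_iff_compactSpace.mp hB
  obtain ⟨U, hU, hUB, hUbasis⟩ := exists_seq_isOpen_inter_nonempty_subset B ⟨0, by simp [B]⟩
  obtain ⟨ξ, hξ⟩ := exists_seq_forall_image_Iio_of_forall_finset
    (fun n s ξ => ‖ξ‖ = 1 ∧ StrongDual.toWeakDual ξ ∈ U n ∧
      ε < infDist ξ (Submodule.span ℝ s : Set (StrongDual ℝ X)))
    fun n s => exists_norm_eq_one_mem_lt_infDist hinf hε.le hεε' hdiam _ (hU n) (hUB n)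
  refine ⟨ξ, fun n => (hξ n).1, fun f hf => ?_, fun n _ => (hξ n).2.2⟩
  rw [Set.mem_preimage, _root_.mem_closure_iff]
  intro O hO hfO
  obtain ⟨n, hn⟩ := hUbasis O hO ⟨_, hfO, hf⟩
  exact ⟨_, hn ⟨(hξ n).2.1, mem_closedBall_zero_iff.mpr (hξ n).1.le⟩,
    Set.mem_image_of_mem _ (Set.mem_range_self n)⟩

/-- Lemma on choosing a weak* dense, norm-separated sequence in the dual sphere:
if `X` is a separable infinite-dimensional Banach space and `ε' > 2ε > 0` are such that
every nonempty relatively weak* open subset of the closed dual ball has norm-diameter `> ε'`,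
then there is a sequence `(ξₙ)` of norm-one functionals which is weak* dense in the closed
dual ball and satisfies `dist(ξₙ, span{ξ₀, …, ξ_{n−1}}) > ε` for every `n ≥ 1`. -/
theorem exists_weakstar_dense_separated_sequence
    {X : Type*} [NormedAddCommGroup X] [NormedSpace ℝ X] [CompleteSpace X]
    [TopologicalSpace.SeparableSpace X] (hinf : ¬ FiniteDimensional ℝ X)
    (ε ε' : ℝ) (hε : 0 < ε) (hεε' : 2 * ε < ε')
    (hdiam : ∀ V : Set (StrongDual ℝ X), V.Nonempty →
      (∃ W : Set (WeakDual ℝ X), IsOpen W ∧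
        V = {f ∈ closedBall (0 : StrongDual ℝ X) 1 | StrongDual.toWeakDual f ∈ W}) →
      ε' < Metric.diam V) :
    ∃ ξ : ℕ → StrongDual ℝ X,
      (∀ n, ‖ξ n‖ = 1) ∧
      (closedBall (0 : StrongDual ℝ X) 1 ⊆
        StrongDual.toWeakDual ⁻¹' closure (StrongDual.toWeakDual '' Set.range ξ)) ∧
      (∀ n : ℕ, 1 ≤ n →
        ε < Metric.infDist (ξ n)
          (Submodule.span ℝ (ξ '' {m | m < n}) : Set (StrongDual ℝ X))) :=
  exists_weakstar_dense_separated_sequence_general hinf ε ε' hε hεε' hdiam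
end

section
/- Let X be a real or complex Banach space and U ⊆ X an open convex set containing 0. Then the sets Hₙ = n·B_X ∩ (1 − 1/n)·U, n ∈ ℕ, form a fundamental family of convex U-bounded sets: (a) each Hₙ is bounded and has positive norm-distance to X \ U; (b) every U-bounded set is contained in some Hₙ; (c) there exist rₙ > 0 with Hₙ + rₙ·B_X ⊆ H_{n+1}. -/
/-!
Everything rests on one consequence of convexity: if `δ B_X ⊆ U` and `0 ≤ s < t`, then
`s U + (t - s) δ B_X ⊆ s U + (t - s) U = t U`. Taking `s = 1 - 1/n` and `t = 1 - 1/(n+1)` gives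
`Hₙ + rₙ B_X ⊆ H_{n+1}`, and since `H_{n+1} ⊆ U` this also shows that `Hₙ` is `U`-bounded.
Conversely, if `‖x‖ ≤ M` on `B` and `B` keeps distance `c` from `X \ U`, then `a B ⊆ U` whenever
`|a - 1| M < c`; as `(1 - 1/n)⁻¹ → 1`, this puts `B` inside `(1 - 1/n) U` for large `n`.
-/

open Metric Pointwise

/-- `B` is a `U`-bounded subset of the open set `U`: it is norm-bounded and has positive
distance to the complement of `U`. -/
def UBounded {X : Type*} [SeminormedAddCommGroup X] (U B : Set X) : Prop :=
  B ⊆ U ∧ Bornology.IsBounded B ∧ ∃ c > 0, ∀ x ∈ B, ∀ y ∉ U, c ≤ dist x y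

open Filter Topology

theorem one_sub_one_div_natCast_mem_Icc (n : ℕ) : 1 - 1 / (n : ℝ) ∈ Set.Icc 0 1 := by
  have hle : 1 / (n : ℝ) ≤ 1 := by rw [one_div]; exact Nat.cast_inv_le_one n
  exact ⟨by linarith, by linarith [show 0 ≤ 1 / (n : ℝ) by positivity]⟩

theorem tendsto_inv_one_sub_one_div_natCast :
    Tendsto (fun n : ℕ => (1 - 1 / (n : ℝ))⁻¹) atTop (𝓝 1) := by
  simpa using ((tendsto_one_div_atTop_nhds_zero_nat (𝕜 := ℝ)).const_sub 1).inv₀ (by norm_num)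

section

variable {X : Type*} [SeminormedAddCommGroup X]

theorem uBounded_of_add_ball_subset {U B : Set X} (hB : Bornology.IsBounded B) {r : ℝ}
    (hr : 0 < r) (hBU : B + ball (0 : X) r ⊆ U) : UBounded U B := by
  refine ⟨fun x hx => ?_, hB, r, hr, fun x hx y hy => ?_⟩
  · simpa using hBU (Set.add_mem_add hx (mem_ball_self hr))
  · by_contra! hxy
    have hyx : y - x ∈ ball (0 : X) r := by rwa [mem_ball_zero_iff, ← dist_eq_norm, dist_comm]
    exact hy (by simpa using hBU (Set.add_mem_add hx hyx))

variable [NormedSpace ℝ X]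

theorem Convex.smul_add_ball_subset_smul {U : Set X} (hUc : Convex ℝ U) {δ : ℝ}
    (hδ : ball (0 : X) δ ⊆ U) {s t : ℝ} (hs : 0 ≤ s) (hst : s < t) :
    s • U + ball (0 : X) ((t - s) * δ) ⊆ t • U := by
  have hts : 0 < t - s := sub_pos.2 hst
  calc s • U + ball (0 : X) ((t - s) * δ) = s • U + (t - s) • ball (0 : X) δ := by
        rw [_root_.smul_ball hts.ne', smul_zero, Real.norm_of_nonneg hts.le]
    _ ⊆ s • U + (t - s) • U := Set.add_subset_add_left (Set.smul_set_mono hδ)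
    _ = t • U := by rw [← hUc.add_smul hs hts.le, add_sub_cancel]

theorem UBounded.eventually_smul_subset {U B : Set X} (hB : UBounded U B) :
    ∀ᶠ a in 𝓝 (1 : ℝ), a • B ⊆ U := by
  obtain ⟨-, hBb, c, hc, hdist⟩ := hB
  obtain ⟨M, hM⟩ := hBb.exists_norm_le
  have hclose : ∀ᶠ a in 𝓝 (1 : ℝ), |a - 1| * M < c :=
    (by fun_prop : ContinuousAt (fun a : ℝ => |a - 1| * M) 1).eventually_lt continuousAt_const
      (by simpa using hc)
  filter_upwards [hclose] with a ha
  rintro _ ⟨x, hx, rfl⟩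
  by_contra hax
  refine (hdist x hx _ hax).not_gt ?_
  calc dist x (a • x) = |a - 1| * ‖x‖ := by
        rw [dist_comm, dist_eq_norm, show a • x - x = (a - 1) • x by rw [sub_smul, one_smul],
          norm_smul, Real.norm_eq_abs]
    _ ≤ |a - 1| * M := mul_le_mul_of_nonneg_left (hM x hx) (abs_nonneg _)
    _ < c := ha

variable (U : Set X)

def fundamentalSet (n : ℕ) : Set X := ball (0 : X) n ∩ ((1 - 1 / (n : ℝ)) • U)

variable {U}

theorem fundamentalSet_subset (hUc : Convex ℝ U) (h0 : (0 : X) ∈ U) (n : ℕ) :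
    fundamentalSet U n ⊆ U := by
  rintro _ ⟨-, x, hx, rfl⟩
  exact hUc.smul_mem_of_zero_mem h0 hx (one_sub_one_div_natCast_mem_Icc n)

theorem fundamentalSet_add_ball_subset (hU : IsOpen U) (hUc : Convex ℝ U) (h0 : (0 : X) ∈ U)
    (n : ℕ) : ∃ r > 0, fundamentalSet U n + ball (0 : X) r ⊆ fundamentalSet U (n + 1) := by
  rcases Nat.eq_zero_or_pos n with rfl | hn
  · exact ⟨1, one_pos, by simp [fundamentalSet]⟩
  obtain ⟨δ, hδ0, hδ⟩ := Metric.isOpen_iff.mp hU 0 h0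
  set t : ℝ := 1 - 1 / (n : ℝ)
  set t' : ℝ := 1 - 1 / ((n + 1 : ℕ) : ℝ)
  have hn0 : (0 : ℝ) < n := by exact_mod_cast hn
  have htt' : t < t' := by
    have : 1 / ((n + 1 : ℕ) : ℝ) < 1 / (n : ℝ) :=
      one_div_lt_one_div_of_lt hn0 (by push_cast; linarith)
    linarith
  have hr : 0 < min 1 ((t' - t) * δ) := lt_min one_pos (mul_pos (sub_pos.2 htt') hδ0)
  refine ⟨_, hr, Set.inter_add_subset.trans (Set.inter_subset_inter ?_ ?_)⟩
  · rw [ball_add_ball hn0 hr, zero_add]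
    exact ball_subset_ball (by push_cast; linarith [min_le_left 1 ((t' - t) * δ)])
  · exact (Set.add_subset_add_left (ball_subset_ball (min_le_right _ _))).trans
      (hUc.smul_add_ball_subset_smul hδ (one_sub_one_div_natCast_mem_Icc n).1 htt')

theorem UBounded.exists_subset_fundamentalSet {B : Set X} (hB : UBounded U B) :
    ∃ n, B ⊆ fundamentalSet U n := by
  obtain ⟨R, hR⟩ := (isBounded_iff_subset_ball 0).1 hB.2.1
  have hball : ∀ᶠ n : ℕ in atTop, B ⊆ ball (0 : X) n :=
    (tendsto_natCast_atTop_atTop.eventually_gt_atTop R).mono fun n hn =>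
      hR.trans (ball_subset_ball hn.le)
  have hsmul : ∀ᶠ n : ℕ in atTop, B ⊆ (1 - 1 / (n : ℝ)) • U := by
    filter_upwards [tendsto_inv_one_sub_one_div_natCast.eventually hB.eventually_smul_subset,
      eventually_ge_atTop 2] with n hn hn2
    have hpos : 0 < 1 - 1 / (n : ℝ) :=
      sub_pos.2 ((div_lt_one (by positivity)).2 (by exact_mod_cast hn2))
    rwa [Set.subset_smul_set_iff₀ hpos.ne']
  exact (hball.and hsmul).exists.imp fun n hn => Set.subset_inter hn.1 hn.2

end

theorem fundamental_family_of_convex_general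
    {X : Type*} [NormedAddCommGroup X] [NormedSpace ℝ X]
    (U : Set X) (hU : IsOpen U) (hUc : Convex ℝ U) (h0 : (0 : X) ∈ U) :
    (∀ n : ℕ, Convex ℝ (ball (0 : X) n ∩ ((1 - 1 / (n : ℝ)) • U)) ∧
        UBounded U (ball (0 : X) n ∩ ((1 - 1 / (n : ℝ)) • U))) ∧
      (∀ B : Set X, UBounded U B →
        ∃ n : ℕ, B ⊆ ball (0 : X) n ∩ ((1 - 1 / (n : ℝ)) • U)) ∧
      (∀ n : ℕ, ∃ r > (0 : ℝ),
        (ball (0 : X) n ∩ ((1 - 1 / (n : ℝ)) • U)) + ball (0 : X) r ⊆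
          ball (0 : X) (n + 1) ∩ ((1 - 1 / ((n : ℝ) + 1)) • U)) := by
  have hstep := fundamentalSet_add_ball_subset hU hUc h0
  refine ⟨fun n => ⟨(convex_ball _ _).inter (hUc.smul _), ?_⟩,
    fun B hB => hB.exists_subset_fundamentalSet, fun n => ?_⟩
  · obtain ⟨r, hr, hsub⟩ := hstep n
    exact uBounded_of_add_ball_subset (isBounded_ball.subset Set.inter_subset_left) hr
      (hsub.trans (fundamentalSet_subset hUc h0 _))
  · simpa only [fundamentalSet, Nat.cast_succ] using hstep n

/-- For an open convex set `U ∋ 0` in a Banach space, the sets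
`Hₙ = n B_X ∩ (1 - 1/n) U` form a fundamental family of convex `U`-bounded sets:
each `Hₙ` is convex and `U`-bounded, every `U`-bounded set is contained in some `Hₙ`,
and `Hₙ + rₙ B_X ⊆ H_{n+1}` for suitable `rₙ > 0`. -/
theorem fundamental_family_of_convex
    {X : Type*} [NormedAddCommGroup X] [NormedSpace ℝ X] [CompleteSpace X]
    (U : Set X) (hU : IsOpen U) (hUc : Convex ℝ U) (h0 : (0 : X) ∈ U) :
    (∀ n : ℕ, Convex ℝ (ball (0 : X) n ∩ ((1 - 1 / (n : ℝ)) • U)) ∧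
        UBounded U (ball (0 : X) n ∩ ((1 - 1 / (n : ℝ)) • U))) ∧
      (∀ B : Set X, UBounded U B →
        ∃ n : ℕ, B ⊆ ball (0 : X) n ∩ ((1 - 1 / (n : ℝ)) • U)) ∧
      (∀ n : ℕ, ∃ r > (0 : ℝ),
        (ball (0 : X) n ∩ ((1 - 1 / (n : ℝ)) • U)) + ball (0 : X) r ⊆
          ball (0 : X) (n + 1) ∩ ((1 - 1 / ((n : ℝ) + 1)) • U)) :=
  fundamental_family_of_convex_general U hU hUc h0
end

section
/- Let Y be a normed space, A ⊆ Y a nonempty convex set, x ∈ Y, and d > 0 with dist(x, A) ≥ d. Then for every δ ∈ (0,1) there exists y ∈ Y with ‖y‖ = 1 such that for every t > 0, dist(x + t·y, A) ≥ d + (1 − δ)·t. -/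
/-!
Separate `A` from the open ball `B(x, d)` by a functional and normalise it to `g` with `‖g‖ = 1`;
then `g a - g x ≥ d` on `A`. Moving from `x` in a unit direction `y` on which `g y ≤ -(1 - δ)`
raises this lower bound by `(1 - δ) t`, and `g a - g z ≤ ‖a - z‖` turns it into a bound on the
distance from `z = x + t y` to `A`.
-/

open Metric

section

variable {E : Type*} [NormedAddCommGroup E] [NormedSpace ℝ E]

namespace ContinuousLinearMap

theorem exists_norm_eq_one_lt_apply_of_lt_opNorm (f : StrongDual ℝ E) {r : ℝ} (hr₀ : 0 ≤ r)
    (hr : r < ‖f‖) : ∃ y : E, ‖y‖ = 1 ∧ r < f y := by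
  lift r to NNReal using hr₀
  obtain ⟨y, hy, hfy⟩ := f.exists_nnnorm_eq_one_lt_apply_of_lt_opNNNorm hr
  have hy : ‖y‖ = 1 := congrArg NNReal.toReal hy
  have hfy : (r : ℝ) < |f y| := hfy
  rcases le_or_gt 0 (f y) with hpos | hneg
  · exact ⟨y, hy, by rwa [abs_of_nonneg hpos] at hfy⟩
  · exact ⟨-y, by rwa [norm_neg], by rwa [abs_of_neg hneg, ← map_neg] at hfy⟩

theorem mul_opNorm_le_sub_of_forall_ball_le (f : StrongDual ℝ E) {x : E} {d u : ℝ}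
    (hd : 0 < d) (hf : ∀ z ∈ ball x d, f z ≤ u) : d * ‖f‖ ≤ u - f x := by
  have hclosed : ∀ z ∈ closedBall x d, f z ≤ u := by
    rw [← closure_ball x hd.ne']
    exact fun z hz => closure_minimal hf (isClosed_le f.continuous continuous_const) hz
  have hbound : ‖f‖ ≤ (u - f x) / d := by
    refine opNorm_bound_of_ball_bound hd _ f fun z hz => ?_
    have hadd := hclosed (x + z) (by simpa using hz)
    have hsub := hclosed (x - z) (by simpa [dist_eq_norm] using hz)
    rw [map_add] at hadd
    rw [map_sub] at hsub
    rw [Real.norm_eq_abs, abs_le]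
    constructor <;> linarith
  rwa [le_div_iff₀ hd, mul_comm] at hbound

end ContinuousLinearMap

theorem exists_opNorm_eq_one_forall_le_sub_of_le_infDist {A : Set E} (hA : Convex ℝ A)
    (hAne : A.Nonempty) {x : E} {d : ℝ} (hd : 0 < d) (hdist : d ≤ infDist x A) :
    ∃ g : StrongDual ℝ E, ‖g‖ = 1 ∧ ∀ a ∈ A, d ≤ g a - g x := by
  obtain ⟨f, u, hfu, huA⟩ := geometric_hahn_banach_open (convex_ball x d) isOpen_ball hA
    (disjoint_ball_infDist.mono_left (ball_subset_ball hdist))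
  have hnorm := f.mul_opNorm_le_sub_of_forall_ball_le hd fun z hz => (hfu z hz).le
  have hf : 0 < ‖f‖ := by
    obtain ⟨a, ha⟩ := hAne
    refine norm_pos_iff.2 fun hf0 => ?_
    have := (hfu x (mem_ball_self hd)).trans_le (huA a ha)
    simp [hf0] at this
  refine ⟨‖f‖⁻¹ • f, by rw [norm_smul, norm_inv, norm_norm, inv_mul_cancel₀ hf.ne'],
    fun a ha => ?_⟩
  simp only [smul_apply, smul_eq_mul]
  rw [← mul_sub, le_inv_mul_iff₀ hf]
  linarith [huA a ha]

theorem le_infDist_of_forall_le_sub (g : StrongDual ℝ E) (hg : ‖g‖ ≤ 1) {s : Set E}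
    (hs : s.Nonempty) {z : E} {r : ℝ} (h : ∀ a ∈ s, r ≤ g a - g z) : r ≤ infDist z s := by
  refine (le_infDist hs).2 fun a ha => ?_
  calc r ≤ g a - g z := h a ha
    _ = g (a - z) := (map_sub g a z).symm
    _ ≤ ‖g (a - z)‖ := Real.le_norm_self _
    _ ≤ ‖g‖ * ‖a - z‖ := g.le_opNorm _
    _ ≤ ‖a - z‖ := mul_le_of_le_one_left (norm_nonneg _) hg
    _ = dist z a := (dist_eq_norm' z a).symm

end

/-- Separation lemma: if `A` is a nonempty convex set with `dist(x, A) ≥ d > 0`, then for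
every `δ ∈ (0,1)` there is a norm-one vector `y` such that `dist(x + t y, A) ≥ d + (1 - δ) t`
for all `t > 0`. -/
theorem exists_direction_increasing_dist
    {Y : Type*} [NormedAddCommGroup Y] [NormedSpace ℝ Y]
    (A : Set Y) (hA : Convex ℝ A) (hAne : A.Nonempty)
    (x : Y) (d : ℝ) (hd : 0 < d) (hdist : d ≤ infDist x A)
    (δ : ℝ) (hδ0 : 0 < δ) (hδ1 : δ < 1) :
    ∃ y : Y, ‖y‖ = 1 ∧ ∀ t : ℝ, 0 < t → d + (1 - δ) * t ≤ infDist (x + t • y) A := by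
  obtain ⟨g, hg, hgA⟩ := exists_opNorm_eq_one_forall_le_sub_of_le_infDist hA hAne hd hdist
  obtain ⟨y, hy, hgy⟩ := g.exists_norm_eq_one_lt_apply_of_lt_opNorm (r := 1 - δ)
    (by linarith) (by rw [hg]; linarith)
  refine ⟨-y, by rwa [norm_neg], fun t ht => le_infDist_of_forall_le_sub g hg.le hAne
    fun a ha => ?_⟩
  simp only [map_add, map_smul, map_neg, smul_eq_mul]
  nlinarith [hgA a ha, mul_lt_mul_of_pos_left hgy ht]
end

section
/- Let A = {x ∈ ℓ∞(ℕ×ℕ) : for every k, the set {n : x(k,n) ≠ k·x(k,1)} is finite}. Then A is a linear subspace of ℓ∞(ℕ×ℕ) = ℓ¹(ℕ×ℕ)* and: (a) every finitely supported element of ℓ∞(ℕ×ℕ) belongs to A⁽¹⁾ (the set of weak* limits of bounded nets/sequences from A); (b) every x ∈ A⁽¹⁾ satisfies lim_{k→∞} x(k,1) = 0. Consequently A⁽¹⁾ is contained in a proper closed hyperplane while A⁽²⁾ = ℓ∞(ℕ×ℕ). -/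
open scoped ENNReal
open Filter

/-- The set of weak* limits of bounded sequences from `S ⊆ ℓ∞(ℕ×ℕ)`; on bounded sets the
weak* topology of `ℓ∞ = (ℓ¹)*` is the topology of pointwise convergence, and sequences
suffice by separability of the predual. -/
def seqDOne (S : Set (lp (fun _ : ℕ × ℕ => ℝ) ∞)) : Set (lp (fun _ : ℕ × ℕ => ℝ) ∞) :=
  {x | ∃ u : ℕ → lp (fun _ : ℕ × ℕ => ℝ) ∞, (∀ j, u j ∈ S) ∧
    (∃ M : ℝ, ∀ j, ‖u j‖ ≤ M) ∧
    ∀ p : ℕ × ℕ, Tendsto (fun j => (u j : ℕ × ℕ → ℝ) p) atTop (nhds ((x : ℕ × ℕ → ℝ) p))}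

/-- `A = {x ∈ ℓ∞(ℕ×ℕ) : for each k, x(k,n) = (k+1)·x(k,0) for all but finitely many n}`. -/
def A13 : Set (lp (fun _ : ℕ × ℕ => ℝ) ∞) :=
  {x | ∀ k : ℕ,
    {n : ℕ | (x : ℕ × ℕ → ℝ) (k, n) ≠ ((k : ℝ) + 1) * (x : ℕ × ℕ → ℝ) (k, 0)}.Finite}

/-!
Along row `k`, an element of `A` is eventually `(k+1)·x(k,0)`, so `(k+1)|x(k,0)| ≤ ‖x‖`.
This bound survives bounded pointwise limits, forcing `x(k,0) → 0` on `A⁽¹⁾`; a Hahn–Banach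
functional vanishing on the closed subspace `{x | x(k,0) → 0}` but not on the first column
gives the hyperplane. Conversely, a finitely supported `x` is the bounded pointwise limit of
the elements of `A` that agree with `x` on the columns `n ≤ j` and equal `(k+1)·x(k,0)` beyond,
and every `x` is the bounded pointwise limit of its finitely supported truncations.
-/

open scoped lp Topology

theorem Submodule.exists_strongDual_apply_ne_zero_of_notMem {E : Type*} [NormedAddCommGroup E]
    [NormedSpace ℝ E] {p : Submodule ℝ E} (hp : IsClosed (p : Set E)) {v : E} (hv : v ∉ p) :
    ∃ φ : StrongDual ℝ E, φ v ≠ 0 ∧ ∀ z ∈ p, φ z = 0 := by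
  obtain ⟨φ, u, hφp, hφv⟩ := geometric_hahn_banach_closed_point p.convex hp hv
  have hu : 0 < u := by simpa using hφp 0 p.zero_mem
  refine ⟨φ, (hu.trans hφv).ne', fun z hz => ?_⟩
  by_contra hφz
  -- `φ` is bounded above on the subspace `p`, which it would map onto `ℝ` otherwise.
  have := hφp ((u / φ z) • z) (p.smul_mem _ hz)
  rw [map_smul, smul_eq_mul, div_mul_cancel₀ u hφz] at this
  exact this.false

theorem lp.isClosed_setOf_tendsto_apply_comp {α ι E : Type*} [NormedAddCommGroup E]
    (l : Filter ι) (g : ι → α) (c : E) :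
    IsClosed {x : ℓ^∞(α, E) | Tendsto (fun k => x (g k)) l (𝓝 c)} :=
  (LipschitzWith.uniformEquicontinuous (fun k (x : ℓ^∞(α, E)) => x (g k)) 1
    fun k => lp.lipschitzWith_one_eval ∞ (g k)).equicontinuous.isClosed_setOfPred_tendsto
    continuous_const

def lp.inftyOfBound {α : Type*} (f : α → ℝ) (C : ℝ) (hf : ∀ i, ‖f i‖ ≤ C) : ℓ^∞(α, ℝ) :=
  ⟨f, memℓp_infty ⟨C, by rintro _ ⟨i, rfl⟩; exact hf i⟩⟩

@[simp]
theorem lp.coe_inftyOfBound {α : Type*} (f : α → ℝ) (C : ℝ) (hf : ∀ i, ‖f i‖ ≤ C) :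
    ⇑(lp.inftyOfBound f C hf) = f :=
  rfl

theorem lp.norm_inftyOfBound_le {α : Type*} [Nonempty α] (f : α → ℝ) (C : ℝ)
    (hf : ∀ i, ‖f i‖ ≤ C) : ‖lp.inftyOfBound f C hf‖ ≤ C :=
  lp.norm_le_of_forall_le' C hf

theorem mem_seqDOne_of_eventually_eq {S : Set ℓ^∞(ℕ × ℕ, ℝ)} {x : ℓ^∞(ℕ × ℕ, ℝ)}
    (u : ℕ → ℓ^∞(ℕ × ℕ, ℝ)) (M : ℝ) (hS : ∀ j, u j ∈ S) (hM : ∀ j, ‖u j‖ ≤ M)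
    (hx : ∀ p, ∀ᶠ j in atTop, u j p = x p) : x ∈ seqDOne S :=
  ⟨u, hS, ⟨M, hM⟩, fun p => tendsto_const_nhds.congr' ((hx p).mono fun _ h => h.symm)⟩

theorem mem_A13_iff {x : ℓ^∞(ℕ × ℕ, ℝ)} :
    x ∈ A13 ↔ ∀ k : ℕ, ∀ᶠ n in cofinite, x (k, n) = ((k : ℝ) + 1) * x (k, 0) :=
  forall_congr' fun _ => eventually_cofinite.symm

def A13Submodule : Submodule ℝ ℓ^∞(ℕ × ℕ, ℝ) where
  carrier := A13
  zero_mem' := mem_A13_iff.2 fun k => Eventually.of_forall fun n => by simp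
  add_mem' {a b} ha hb := mem_A13_iff.2 fun k =>
    ((mem_A13_iff.1 ha k).and (mem_A13_iff.1 hb k)).mono fun n h => by
      simp only [lp.coeFn_add, Pi.add_apply, h.1, h.2]
      ring
  smul_mem' c a ha := mem_A13_iff.2 fun k =>
    (mem_A13_iff.1 ha k).mono fun n h => by
      simp only [lp.coeFn_smul, Pi.smul_apply, smul_eq_mul, h]
      ring

theorem coe_A13Submodule : (A13Submodule : Set ℓ^∞(ℕ × ℕ, ℝ)) = A13 :=
  rfl

theorem norm_mul_apply_zero_le_of_mem_A13 {x : ℓ^∞(ℕ × ℕ, ℝ)} (hx : x ∈ A13) (k : ℕ) :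
    ((k : ℝ) + 1) * ‖x (k, 0)‖ ≤ ‖x‖ := by
  obtain ⟨n, hn⟩ := (mem_A13_iff.1 hx k).exists
  calc ((k : ℝ) + 1) * ‖x (k, 0)‖ = ‖x (k, n)‖ := by
        rw [hn, norm_mul, Real.norm_of_nonneg (by positivity : (0 : ℝ) ≤ k + 1)]
    _ ≤ ‖x‖ := lp.norm_apply_le_norm ENNReal.top_ne_zero x _

theorem tendsto_apply_zero_of_mem_seqDOne_A13 {x : ℓ^∞(ℕ × ℕ, ℝ)} (hx : x ∈ seqDOne A13) :
    Tendsto (fun k : ℕ => x (k, 0)) atTop (𝓝 0) := by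
  obtain ⟨u, huA, ⟨M, hM⟩, hux⟩ := hx
  have hbound (k : ℕ) : ‖x (k, 0)‖ ≤ M * (1 / ((k : ℝ) + 1)) := by
    rw [mul_one_div, le_div_iff₀' (by positivity)]
    exact le_of_tendsto ((hux (k, 0)).norm.const_mul _) (Eventually.of_forall fun j =>
      (norm_mul_apply_zero_le_of_mem_A13 (huA j) k).trans (hM j))
  exact squeeze_zero_norm hbound
    (by simpa using tendsto_one_div_add_atTop_nhds_zero_nat.const_mul M)

theorem mem_seqDOne_A13_of_finite_support {x : ℓ^∞(ℕ × ℕ, ℝ)}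
    (hx : {p : ℕ × ℕ | x p ≠ 0}.Finite) : x ∈ seqDOne A13 := by
  obtain ⟨K, hK⟩ : ∃ K : ℕ, ∀ p, x p ≠ 0 → p.1 ≤ K :=
    (hx.image Prod.fst).bddAbove.imp fun K hK p hp => hK ⟨p, hp, rfl⟩
  set C : ℝ := ((K : ℝ) + 1) * ‖x‖
  have hxC (p : ℕ × ℕ) : ‖x p‖ ≤ C :=
    (lp.norm_apply_le_norm ENNReal.top_ne_zero x p).trans
      (le_mul_of_one_le_left (norm_nonneg _) (by simp))
  have hcolC (k : ℕ) : ‖((k : ℝ) + 1) * x (k, 0)‖ ≤ C := by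
    by_cases h : x (k, 0) = 0
    · simpa [h] using (norm_nonneg _).trans (hxC (k, 0))
    · rw [norm_mul, Real.norm_of_nonneg (by positivity : (0 : ℝ) ≤ k + 1)]
      exact mul_le_mul (by gcongr; exact_mod_cast hK _ h)
        (lp.norm_apply_le_norm ENNReal.top_ne_zero x _) (norm_nonneg _) (by positivity)
  let f (j : ℕ) (p : ℕ × ℕ) : ℝ := if p.2 ≤ j then x p else ((p.1 : ℝ) + 1) * x (p.1, 0)
  have hfC (j : ℕ) (p : ℕ × ℕ) : ‖f j p‖ ≤ C := by
    unfold f; split_ifs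
    exacts [hxC p, hcolC p.1]
  refine mem_seqDOne_of_eventually_eq (fun j => lp.inftyOfBound (f j) C (hfC j)) C
    (fun j => mem_A13_iff.2 fun k => ?_) (fun j => lp.norm_inftyOfBound_le _ _ _)
    (fun p => (eventually_ge_atTop p.2).mono fun j hj => by simp [f, hj])
  filter_upwards [Nat.cofinite_eq_atTop ▸ eventually_gt_atTop j] with n hn
  simp [f, hn.not_ge]

theorem seqDOne_seqDOne_A13 : seqDOne (seqDOne A13) = Set.univ := by
  refine Set.eq_univ_of_forall fun x => ?_
  let f (j : ℕ) (p : ℕ × ℕ) : ℝ := if p.1 ≤ j ∧ p.2 ≤ j then x p else 0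
  have hfx (j : ℕ) (p : ℕ × ℕ) : ‖f j p‖ ≤ ‖x‖ := by
    unfold f; split_ifs
    exacts [lp.norm_apply_le_norm ENNReal.top_ne_zero x p, by simp]
  refine mem_seqDOne_of_eventually_eq (fun j => lp.inftyOfBound (f j) ‖x‖ (hfx j)) ‖x‖
    (fun j => mem_seqDOne_A13_of_finite_support ?_) (fun j => lp.norm_inftyOfBound_le _ _ _)
    (fun p => (eventually_ge_atTop (max p.1 p.2)).mono fun j hj => by simp_all [f])
  refine ((Set.finite_Iic j).prod (Set.finite_Iic j)).subset fun p hp => ?_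
  by_contra h
  rw [Set.mem_prod, Set.mem_Iic, Set.mem_Iic] at h
  exact hp (by simp [f, h])

def firstColumnTendstoZero : Submodule ℝ ℓ^∞(ℕ × ℕ, ℝ) where
  carrier := {x | Tendsto (fun k : ℕ => x (k, 0)) atTop (𝓝 0)}
  zero_mem' := by simp
  add_mem' ha hb := by simpa using ha.add hb
  smul_mem' c _ ha := by simpa using ha.const_mul c

theorem isClosed_firstColumnTendstoZero :
    IsClosed (firstColumnTendstoZero : Set ℓ^∞(ℕ × ℕ, ℝ)) :=
  lp.isClosed_setOf_tendsto_apply_comp atTop (fun k => (k, 0)) 0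

theorem exists_strongDual_ne_zero_forall_mem_seqDOne_A13 :
    ∃ φ : StrongDual ℝ ℓ^∞(ℕ × ℕ, ℝ), φ ≠ 0 ∧ ∀ x ∈ seqDOne A13, φ x = 0 := by
  let e : ℓ^∞(ℕ × ℕ, ℝ) := lp.inftyOfBound (fun p => if p.2 = 0 then 1 else 0) 1
    fun p => by split_ifs <;> simp
  have he : e ∉ firstColumnTendstoZero := by
    intro h
    replace h : Tendsto (fun k : ℕ => e (k, 0)) atTop (𝓝 0) := h
    simp only [e, lp.coe_inftyOfBound, if_true] at h
    exact one_ne_zero (tendsto_nhds_unique tendsto_const_nhds h)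
  obtain ⟨φ, hφe, hφZ⟩ :=
    Submodule.exists_strongDual_apply_ne_zero_of_notMem isClosed_firstColumnTendstoZero he
  exact ⟨φ, fun h => hφe (by simp [h]),
    fun x hx => hφZ x (tendsto_apply_zero_of_mem_seqDOne_A13 hx)⟩

/-- `A13` is a linear subspace of `ℓ∞(ℕ×ℕ) = ℓ¹(ℕ×ℕ)*`; every finitely supported element of
`ℓ∞(ℕ×ℕ)` belongs to `A⁽¹⁾`; every `x ∈ A⁽¹⁾` satisfies `x(k,0) → 0` as `k → ∞`;
consequently `A⁽¹⁾` is contained in a proper closed hyperplane while `A⁽²⁾ = ℓ∞(ℕ×ℕ)`. -/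
theorem linfty_example :
    (∃ p : Submodule ℝ (lp (fun _ : ℕ × ℕ => ℝ) ∞),
      (p : Set (lp (fun _ : ℕ × ℕ => ℝ) ∞)) = A13) ∧
    (∀ x : lp (fun _ : ℕ × ℕ => ℝ) ∞, {p : ℕ × ℕ | (x : ℕ × ℕ → ℝ) p ≠ 0}.Finite →
      x ∈ seqDOne A13) ∧
    (∀ x ∈ seqDOne A13,
      Tendsto (fun k : ℕ => (x : ℕ × ℕ → ℝ) (k, 0)) atTop (nhds 0)) ∧
    (∃ φ : StrongDual ℝ (lp (fun _ : ℕ × ℕ => ℝ) ∞), φ ≠ 0 ∧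
      ∀ x ∈ seqDOne A13, φ x = 0) ∧
    seqDOne (seqDOne A13) = Set.univ := by
  exact ⟨⟨A13Submodule, coe_A13Submodule⟩, fun _ => mem_seqDOne_A13_of_finite_support,
    fun _ => tendsto_apply_zero_of_mem_seqDOne_A13,
    exists_strongDual_ne_zero_forall_mem_seqDOne_A13, seqDOne_seqDOne_A13⟩
end
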